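/- For every natural number l, the kernel K_l is three times continuously differentiable on the triangle Δ(r_m, r_M) = {(p,r) ∈ ℝ² : r_m ≤ r ≤ p ≤ r_M} (that is, K_l is ContDiffOn of order 3 on Δ(r_m, r_M)), despite the appearance of the factor √(p − r) in its defining formula. -/

import Mathlib

noncomputable section
open Real MeasureTheory

/-- Legendre polynomial of degree `l` (Rodrigues' formula). -/
def legP (l : ℕ) (x : ℝ) : ℝ :=
  (1 / (2 ^ l * Nat.factorial l : ℝ)) * iteratedDeriv l (fun y : ℝ => (y ^ 2 - 1) ^ l) x
def Q1 (R p r : ℝ) : ℝ := 2 * π * r ^ 2 * Real.sqrt (p ^ 2 - R ^ 2) / (R * p * Real.sqrt (p + r))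
def Q2 (p r : ℝ) : ℝ := 2 * π * r / p
def Q3 (R p r : ℝ) : ℝ := Real.sqrt (p ^ 2 - R ^ 2) * Real.sqrt (p + r) / p ^ 2
def Q4 (R p r : ℝ) : ℝ := R * r / p ^ 2

/-- The kernel `K_l` in its algebraic form. -/
def Kalg (R : ℝ) (l : ℕ) (p r : ℝ) : ℝ :=
  ∑ σ ∈ ({-1, 1} : Finset ℝ),
    σ ^ l * (Q1 R p r - σ * Q2 p r * Real.sqrt (p - r)) *
      legP l (Q3 R p r * Real.sqrt (p - r) + σ * Q4 R p r)

/-! Write `s = √(p - r)` and `u = Q3 s`. Since `P_l(-x) = (-1)^l P_l(x)`, the two terms of the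
kernel combine to `Q1 (P_l(Q4 + u) + P_l(Q4 - u)) - Q2 s (P_l(Q4 + u) - P_l(Q4 - u))`. For a
polynomial, the part even in `u` is a polynomial in `(Q4, u²)` and the odd part is `u` times one,
so `K_l` is a smooth function of `Q1, …, Q4`, `u² = Q3² (p - r)` and `s u = Q3 (p - r)`: the
square root `√(p - r)` disappears, and the remaining ones are smooth as long as `p > R > 0`
and `r > 0`. -/

open Polynomial
open scoped ContDiff Nat

theorem Polynomial.iteratedDeriv_eval {𝕜 : Type*} [NontriviallyNormedField 𝕜] (p : 𝕜[X])
    (n : ℕ) :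
    iteratedDeriv n (fun x => p.eval x) = fun x => (derivative^[n] p).eval x := by
  induction n generalizing p with
  | zero => simp
  | succ n ih =>
    rw [iteratedDeriv_succ', Function.iterate_succ_apply, ← ih]
    congr 1
    ext x
    exact p.deriv

def legendrePoly (l : ℕ) : ℝ[X] :=
  C (1 / (2 ^ l * l ! : ℝ)) * derivative^[l] ((X ^ 2 - 1) ^ l)

lemma legP_eq_eval (l : ℕ) (x : ℝ) : legP l x = (legendrePoly l).eval x := by
  have h : (fun y : ℝ => (y ^ 2 - 1) ^ l) = fun y => ((X ^ 2 - 1) ^ l : ℝ[X]).eval y := by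
    simp
  rw [legP, legendrePoly, eval_mul, eval_C, h, Polynomial.iteratedDeriv_eval]

lemma legP_neg (l : ℕ) (x : ℝ) : legP l (-x) = (-1) ^ l * legP l x := by
  have h := iteratedDeriv_comp_neg l (fun y : ℝ => (y ^ 2 - 1) ^ l) (-x)
  simp only [neg_sq, neg_neg, smul_eq_mul] at h
  rw [legP, legP, h]
  ring

theorem Polynomial.exists_contDiff_even_odd_parts {𝕜 : Type*} [NontriviallyNormedField 𝕜]
    (q : 𝕜[X]) :
    ∃ E O : 𝕜 × 𝕜 → 𝕜, ContDiff 𝕜 ω E ∧ ContDiff 𝕜 ω O ∧ ∀ x u : 𝕜,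
      q.eval (x + u) + q.eval (x - u) = E (x, u ^ 2) ∧
        q.eval (x + u) - q.eval (x - u) = u * O (x, u ^ 2) := by
  induction q using Polynomial.induction_on with
  | C a =>
    exact ⟨fun _ => 2 * a, fun _ => 0, contDiff_const, contDiff_const, fun x u => by
      simp only [eval_C]; constructor <;> ring⟩
  | add p q hp hq =>
    obtain ⟨E₁, O₁, hE₁, hO₁, h₁⟩ := hp
    obtain ⟨E₂, O₂, hE₂, hO₂, h₂⟩ := hq
    refine ⟨E₁ + E₂, O₁ + O₂, hE₁.add hE₂, hO₁.add hO₂, fun x u => ?_⟩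
    obtain ⟨hs₁, hd₁⟩ := h₁ x u
    obtain ⟨hs₂, hd₂⟩ := h₂ x u
    simp only [eval_add, Pi.add_apply]
    constructor
    · linear_combination hs₁ + hs₂
    · linear_combination hd₁ + hd₂
  | monomial n a ih =>
    -- multiplying by `X` maps `(E, O)` to `(x E + v O, x O + E)`, where `v = u²`
    obtain ⟨E, O, hE, hO, h⟩ := ih
    refine ⟨fun z => z.1 * E z + z.2 * O z, fun z => z.1 * O z + E z,
      (contDiff_fst.mul hE).add (contDiff_snd.mul hO), (contDiff_fst.mul hO).add hE,
      fun x u => ?_⟩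
    obtain ⟨hs, hd⟩ := h x u
    have hX (y : 𝕜) : (C a * X ^ (n + 1)).eval y = y * (C a * X ^ n).eval y := by
      simp only [eval_mul, eval_C, eval_pow, eval_X]; ring
    rw [hX, hX]
    constructor
    · linear_combination x * hs + u * hd
    · linear_combination x * hd + u * hs

lemma sum_sign_pow_mul_of_parity {f : ℝ → ℝ} {l : ℕ} (hf : ∀ x, f (-x) = (-1) ^ l * f x)
    (a b u v : ℝ) :
    ∑ σ ∈ ({-1, 1} : Finset ℝ), σ ^ l * (a - σ * b) * f (u + σ * v) =
      a * (f (v + u) + f (v - u)) - b * (f (v + u) - f (v - u)) := by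
  have hneg : f (u + -1 * v) = (-1) ^ l * f (v - u) := by
    rw [← hf]; ring_nf
  have hsq : ((-1 : ℝ) ^ l) * (-1) ^ l = 1 := by
    rw [← mul_pow]; norm_num
  rw [Finset.sum_pair (by norm_num), hneg, one_pow, one_mul, one_mul,
    show u + 1 * v = v + u by ring]
  linear_combination (a + b) * f (v - u) * hsq

def kernelSmooth (E O : ℝ × ℝ → ℝ) (R p r : ℝ) : ℝ :=
  Q1 R p r * E (Q4 R p r, Q3 R p r ^ 2 * (p - r)) -
    Q2 p r * Q3 R p r * (p - r) * O (Q4 R p r, Q3 R p r ^ 2 * (p - r))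

lemma Kalg_eq_kernelSmooth {R p r : ℝ} (hrp : r ≤ p) {l : ℕ} {E O : ℝ × ℝ → ℝ}
    (hEO : ∀ x u : ℝ,
      (legendrePoly l).eval (x + u) + (legendrePoly l).eval (x - u) = E (x, u ^ 2) ∧
        (legendrePoly l).eval (x + u) - (legendrePoly l).eval (x - u) = u * O (x, u ^ 2)) :
    Kalg R l p r = kernelSmooth E O R p r := by
  rw [Kalg]
  set s := √(p - r)
  have hs : s ^ 2 = p - r := Real.sq_sqrt (sub_nonneg.2 hrp)
  obtain ⟨hsum, hdiff⟩ := hEO (Q4 R p r) (Q3 R p r * s)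
  simp_rw [mul_assoc _ (Q2 p r) s]
  rw [sum_sign_pow_mul_of_parity (legP_neg l)]
  simp only [legP_eq_eval]
  rw [hsum, hdiff, kernelSmooth, mul_pow, hs]
  linear_combination -Q2 p r * Q3 R p r * O (Q4 R p r, Q3 R p r ^ 2 * (p - r)) * hs

section Smoothness

variable {R : ℝ} {n : WithTop ℕ∞} {z : ℝ × ℝ}

lemma contDiffAt_Q2 (hp : z.1 ≠ 0) : ContDiffAt ℝ n (fun q : ℝ × ℝ => Q2 q.1 q.2) z :=
  (contDiffAt_const.mul contDiffAt_snd).div contDiffAt_fst hp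

lemma contDiffAt_Q4 (hp : z.1 ≠ 0) : ContDiffAt ℝ n (fun q : ℝ × ℝ => Q4 R q.1 q.2) z :=
  (contDiffAt_const.mul contDiffAt_snd).div (contDiffAt_fst.pow 2) (pow_ne_zero 2 hp)

lemma contDiffAt_Q3 (hR : 0 ≤ R) (hp : R < z.1) (hr : 0 < z.2) :
    ContDiffAt ℝ n (fun q : ℝ × ℝ => Q3 R q.1 q.2) z := by
  have hp₀ : 0 < z.1 := hR.trans_lt hp
  refine ((((contDiffAt_fst.pow 2).sub contDiffAt_const).sqrt ?_).mul
    ((contDiffAt_fst.add contDiffAt_snd).sqrt ?_)).div (contDiffAt_fst.pow 2) ?_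
  · nlinarith
  · positivity
  · positivity

lemma contDiffAt_Q1 (hR : 0 < R) (hp : R < z.1) (hr : 0 < z.2) :
    ContDiffAt ℝ n (fun q : ℝ × ℝ => Q1 R q.1 q.2) z := by
  have hp₀ : 0 < z.1 := hR.trans hp
  refine (((contDiffAt_const.mul (contDiffAt_snd.pow 2)).mul
    (((contDiffAt_fst.pow 2).sub contDiffAt_const).sqrt ?_)).div
    ((contDiffAt_const.mul contDiffAt_fst).mul ((contDiffAt_fst.add contDiffAt_snd).sqrt ?_)) ?_)
  · nlinarith
  · positivity
  · have : 0 < √(z.1 + z.2) := Real.sqrt_pos.2 (by positivity)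
    positivity

lemma contDiffAt_kernelSmooth {E O : ℝ × ℝ → ℝ} (hE : ContDiff ℝ n E)
    (hO : ContDiff ℝ n O) (hR : 0 < R) (hp : R < z.1) (hr : 0 < z.2) :
    ContDiffAt ℝ n (fun q : ℝ × ℝ => kernelSmooth E O R q.1 q.2) z := by
  have hp₀ : z.1 ≠ 0 := (hR.trans hp).ne'
  have hQ3 := contDiffAt_Q3 (n := n) hR.le hp hr
  have harg : ContDiffAt ℝ n
      (fun q : ℝ × ℝ => (Q4 R q.1 q.2, Q3 R q.1 q.2 ^ 2 * (q.1 - q.2))) z :=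
    (contDiffAt_Q4 hp₀).prodMk ((hQ3.pow 2).mul (contDiffAt_fst.sub contDiffAt_snd))
  exact ((contDiffAt_Q1 hR hp hr).mul (hE.contDiffAt.comp z harg)).sub
    ((((contDiffAt_Q2 hp₀).mul hQ3).mul (contDiffAt_fst.sub contDiffAt_snd)).mul
      (hO.contDiffAt.comp z harg))

end Smoothness

theorem kernel_contDiffOn_triangle_general
    (R rm rM : ℝ) (hR : 0 < R) (hRm : R < rm) (l : ℕ) :
    ContDiffOn ℝ 3 (fun q : ℝ × ℝ => Kalg R l q.1 q.2)
      {q : ℝ × ℝ | rm ≤ q.2 ∧ q.2 ≤ q.1 ∧ q.1 ≤ rM} := by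
  obtain ⟨E, O, hE, hO, hEO⟩ := (legendrePoly l).exists_contDiff_even_odd_parts
  have hsmooth : ContDiffOn ℝ 3 (fun q : ℝ × ℝ => kernelSmooth E O R q.1 q.2)
      {q : ℝ × ℝ | rm ≤ q.2 ∧ q.2 ≤ q.1 ∧ q.1 ≤ rM} := by
    rintro q ⟨hr, hrp, -⟩
    exact (contDiffAt_kernelSmooth (hE.of_le le_top) (hO.of_le le_top) hR
      (by linarith) (by linarith)).contDiffWithinAt
  refine hsmooth.congr ?_
  rintro q ⟨-, hrp, -⟩
  exact Kalg_eq_kernelSmooth hrp hEO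

/-- The kernel `K_l` is three times continuously differentiable on the closed triangle
`Δ(r_m, r_M) = {(p, r) : r_m ≤ r ≤ p ≤ r_M}`. -/
theorem kernel_contDiffOn_triangle
    (R rm rM : ℝ) (hR : 0 < R) (hRm : R < rm) (hmM : rm < rM) (l : ℕ) :
    ContDiffOn ℝ 3 (fun q : ℝ × ℝ => Kalg R l q.1 q.2)
      {q : ℝ × ℝ | rm ≤ q.2 ∧ q.2 ≤ q.1 ∧ q.1 ≤ rM} :=
  kernel_contDiffOn_triangle_general R rm rM hR hRm l
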